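/- arXiv:1810.02439 — 3 statements merged into one kernel-verified Lean document; each statement's English description precedes it below -/
import Mathlib

section
/- The area of the circular segment cut off by a chord of length ℓ from a disk of radius r = 1/κ, namely A(ℓ,κ) = θr²/2 − r²·cos(θ/2)·sin(θ/2) with θ = 2 arcsin(ℓκ/2), satisfies |A(ℓ,κ) − ℓ³κ/12| ≤ C·ℓ⁵κ³ for 0 ≤ ℓκ ≤ 1 and a universal constant C. -/
/-!
With `x = ℓκ/2` the half-angle is `arcsin x`, so the segment area is
`(arcsin x - x √(1 - x²)) / κ²` and `ℓ³κ/12 = (2x³/3) / κ²`. The difference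
`R x = arcsin x - x √(1 - x²) - 2x³/3` vanishes at `0` and has derivative `2x² (1/√(1 - x²) - 1)`,
which lies between `0` and `2x⁴` for `0 ≤ x ≤ 1/2`; hence `0 ≤ R x ≤ 2x⁵/5`, and dividing by `κ²`
gives the bound with `C = 1/80`.
-/

open Real Set

noncomputable def segmentArea (ℓ κ : ℝ) : ℝ :=
  let r : ℝ := 1 / κ
  let θ : ℝ := 2 * arcsin (ℓ * κ / 2)
  θ * r ^ 2 / 2 - r ^ 2 * cos (θ / 2) * sin (θ / 2)

noncomputable def segmentRemainder (x : ℝ) : ℝ := arcsin x - x * √(1 - x ^ 2) - 2 * x ^ 3 / 3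

lemma segmentArea_sub_eq {ℓ κ : ℝ} (hκ : κ ≠ 0) (h₁ : -1 ≤ ℓ * κ / 2) (h₂ : ℓ * κ / 2 ≤ 1) :
    segmentArea ℓ κ - ℓ ^ 3 * κ / 12 = segmentRemainder (ℓ * κ / 2) / κ ^ 2 := by
  simp only [segmentArea, segmentRemainder, mul_div_cancel_left₀ _ (two_ne_zero' ℝ),
    cos_arcsin, sin_arcsin h₁ h₂]
  field_simp
  ring

@[fun_prop]
lemma continuous_segmentRemainder : Continuous segmentRemainder := by
  unfold segmentRemainder
  fun_prop

lemma hasDerivAt_segmentRemainder {x : ℝ} (h₁ : -1 < x) (h₂ : x < 1) :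
    HasDerivAt segmentRemainder (2 * x ^ 2 * (1 / √(1 - x ^ 2) - 1)) x := by
  have hpos : 0 < 1 - x ^ 2 := by nlinarith
  have hsq : √(1 - x ^ 2) ^ 2 = 1 - x ^ 2 := sq_sqrt hpos.le
  have hroot : HasDerivAt (fun y ↦ √(1 - y ^ 2)) (-x / √(1 - x ^ 2)) x := by
    convert ((hasDerivAt_pow 2 x).const_sub 1).sqrt hpos.ne' using 1
    field_simp
    ring
  refine (((hasDerivAt_arcsin h₁.ne' h₂.ne).sub ((hasDerivAt_id' x).mul hroot)).sub
    (((hasDerivAt_pow 3 x).const_mul 2).div_const 3)).congr_deriv ?_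
  field_simp
  rw [hsq]
  push_cast
  ring

lemma one_div_sqrt_one_sub_le {t : ℝ} (h₀ : 0 ≤ t) (h₁ : t + t ^ 2 ≤ 1) :
    1 / √(1 - t) ≤ 1 + t := by
  have hpos : 0 < 1 - t := by nlinarith
  rw [div_le_iff₀ (sqrt_pos.mpr hpos), ← sqrt_sq (by positivity : 0 ≤ 1 + t), ← sqrt_mul
    (by positivity)]
  exact one_le_sqrt.mpr (by nlinarith)

lemma segmentRemainder_nonneg {x : ℝ} (h₀ : 0 ≤ x) (h₁ : x ≤ 1) : 0 ≤ segmentRemainder x := by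
  have hmono : MonotoneOn segmentRemainder (Icc 0 x) := by
    refine monotoneOn_of_hasDerivWithinAt_nonneg
      (f' := fun y ↦ 2 * y ^ 2 * (1 / √(1 - y ^ 2) - 1)) (convex_Icc 0 x)
      continuous_segmentRemainder.continuousOn (fun y hy ↦ ?_) (fun y hy ↦ ?_)
    all_goals rw [interior_Icc] at hy
    · exact (hasDerivAt_segmentRemainder (by linarith [hy.1])
        (by linarith [hy.2])).hasDerivWithinAt
    · have hpos : 0 < 1 - y ^ 2 := by nlinarith [hy.1, hy.2]
      have hinv : 1 ≤ 1 / √(1 - y ^ 2) :=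
        (one_le_div (sqrt_pos.mpr hpos)).mpr (sqrt_le_one.mpr (by nlinarith))
      exact mul_nonneg (by positivity) (by linarith)
  simpa [segmentRemainder] using hmono ⟨le_rfl, h₀⟩ ⟨h₀, le_rfl⟩ h₀

lemma segmentRemainder_le {x : ℝ} (h₀ : 0 ≤ x) (h₁ : x ≤ 1 / 2) :
    segmentRemainder x ≤ 2 * x ^ 5 / 5 := by
  have hmono : MonotoneOn (fun y ↦ 2 * y ^ 5 / 5 - segmentRemainder y) (Icc 0 x) := by
    refine monotoneOn_of_hasDerivWithinAt_nonneg
      (f' := fun y ↦ 2 * y ^ 4 - 2 * y ^ 2 * (1 / √(1 - y ^ 2) - 1)) (convex_Icc 0 x)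
      (by fun_prop : Continuous _).continuousOn (fun y hy ↦ ?_) (fun y hy ↦ ?_)
    all_goals rw [interior_Icc] at hy
    · have hR := hasDerivAt_segmentRemainder (x := y) (by linarith [hy.1]) (by linarith [hy.2])
      exact ((((hasDerivAt_pow 5 y).const_mul 2).div_const 5).sub hR).hasDerivWithinAt.congr_deriv
        (by push_cast; ring)
    · have hy2 : y ^ 2 ≤ 1 / 4 := by nlinarith [hy.1, hy.2]
      have hinv : 1 / √(1 - y ^ 2) ≤ 1 + y ^ 2 :=
        one_div_sqrt_one_sub_le (sq_nonneg y) (by nlinarith)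
      calc (0 : ℝ) = 2 * y ^ 4 - 2 * y ^ 2 * ((1 + y ^ 2) - 1) := by ring
        _ ≤ _ := by gcongr
  simpa [segmentRemainder] using hmono ⟨le_rfl, h₀⟩ ⟨h₀, le_rfl⟩ h₀

/-- Quantitative Taylor remainder for the area of the circular segment cut off by a chord of
length `ℓ` from a disk of curvature `κ > 0` (radius `r = 1/κ`):
with `θ = 2 arcsin(ℓκ/2)` and `A(ℓ,κ) = θr²/2 − r²cos(θ/2)sin(θ/2)`, one has
`|A(ℓ,κ) − ℓ³κ/12| ≤ C·ℓ⁵κ³` for `0 ≤ ℓκ ≤ 1`, with a universal constant `C`. -/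
theorem stmt_5 :
    ∃ C : ℝ, 0 < C ∧ ∀ ℓ κ : ℝ, 0 ≤ ℓ → 0 < κ → ℓ * κ ≤ 1 →
      let r : ℝ := 1 / κ
      let θ : ℝ := 2 * Real.arcsin (ℓ * κ / 2)
      |(θ * r ^ 2 / 2 - r ^ 2 * Real.cos (θ / 2) * Real.sin (θ / 2)) - ℓ ^ 3 * κ / 12|
        ≤ C * ℓ ^ 5 * κ ^ 3 := by
  refine ⟨1 / 80, by norm_num, fun ℓ κ hℓ hκ hℓκ ↦ ?_⟩
  show |segmentArea ℓ κ - ℓ ^ 3 * κ / 12| ≤ 1 / 80 * ℓ ^ 5 * κ ^ 3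
  have h₀ : 0 ≤ ℓ * κ / 2 := by positivity
  have h₁ : ℓ * κ / 2 ≤ 1 / 2 := by linarith
  rw [segmentArea_sub_eq hκ.ne' (by linarith) (by linarith), abs_div,
    abs_of_nonneg (segmentRemainder_nonneg h₀ (by linarith)), abs_of_pos (by positivity),
    div_le_iff₀ (by positivity)]
  calc segmentRemainder (ℓ * κ / 2) ≤ 2 * (ℓ * κ / 2) ^ 5 / 5 := segmentRemainder_le h₀ h₁
    _ = 1 / 80 * ℓ ^ 5 * κ ^ 3 * κ ^ 2 := by ring
end

section
/- Let u : [−π, π] → ℝ be Lipschitz with u(t) ≥ −1/2 for all t and ‖u‖_{W^{1,∞}} ≤ 1. Then the length L(γ_u) of the curve γ_u(t) = (1+u(t))(cos t, sin t) satisfies |L(γ_u) − 2π − ∫_{−π}^{π} u dt − (1/2)∫_{−π}^{π} (u')² dt| ≤ C·‖u‖³_{W^{1,∞}} for a universal constant C. -/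
open Real

lemma ptwise_est (a b M : ℝ) (ha : -(1/2) ≤ a) (haM : |a| ≤ M) (hbM : |b| ≤ M)
    (hM1 : M ≤ 1) :
    |Real.sqrt ((1 + a) ^ 2 + b ^ 2) - (1 + a + b ^ 2 / 2)| ≤ (5/2) * M ^ 3 := by
  have hM0 : 0 ≤ M := le_trans (abs_nonneg a) haM
  set s := Real.sqrt ((1 + a) ^ 2 + b ^ 2) with hs_def
  set T := 1 + a + b ^ 2 / 2 with hT_def
  have hnn : (0:ℝ) ≤ (1 + a) ^ 2 + b ^ 2 := by positivity
  have hs0 : 0 ≤ s := Real.sqrt_nonneg _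
  have hsq : s ^ 2 = (1 + a) ^ 2 + b ^ 2 := Real.sq_sqrt hnn
  have hT : (1:ℝ)/2 ≤ T := by
    have : (0:ℝ) ≤ b ^ 2 / 2 := by positivity
    simp only [hT_def]; linarith
  have hsum : (1:ℝ)/2 ≤ s + T := by linarith
  have hdiff : s ^ 2 - T ^ 2 = -(a * b ^ 2) - b ^ 4 / 4 := by
    rw [hsq]; simp only [hT_def]; ring
  have hb2 : b ^ 2 ≤ M ^ 2 := by
    have := sq_abs b
    nlinarith [abs_nonneg b]
  have hbound : |s ^ 2 - T ^ 2| ≤ (5/4) * M ^ 3 := by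
    rw [hdiff]
    have h1 : |(-(a * b ^ 2) - b ^ 4 / 4)| ≤ |a| * b ^ 2 + b ^ 4 / 4 := by
      calc |(-(a * b ^ 2) - b ^ 4 / 4)| ≤ |a * b ^ 2| + |b ^ 4 / 4| := by
            rw [neg_sub_left]
            calc |(-(b ^ 4 / 4 + a * b ^ 2))| = |b ^ 4 / 4 + a * b ^ 2| := abs_neg _
              _ ≤ |b ^ 4 / 4| + |a * b ^ 2| := abs_add_le _ _
              _ = |a * b ^ 2| + |b ^ 4 / 4| := by ring
        _ = |a| * b ^ 2 + b ^ 4 / 4 := by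
            rw [abs_mul, abs_of_nonneg (by positivity : (0:ℝ) ≤ b ^ 2),
              abs_of_nonneg (by positivity : (0:ℝ) ≤ b ^ 4 / 4)]
    have h2 : |a| * b ^ 2 ≤ M * M ^ 2 := by
      apply mul_le_mul haM hb2 (by positivity) hM0
    have h3 : b ^ 4 ≤ M ^ 4 := by nlinarith [sq_nonneg b, sq_nonneg M]
    have h4 : M ^ 4 ≤ M ^ 3 := by nlinarith [pow_nonneg hM0 3]
    nlinarith
  have key : |s - T| * (s + T) = |s ^ 2 - T ^ 2| := by
    have : |s - T| * |s + T| = |(s - T) * (s + T)| := (abs_mul _ _).symm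
    rw [abs_of_nonneg (le_trans (by norm_num : (0:ℝ) ≤ 1/2) hsum)] at this
    rw [this]; ring_nf
  have : |s - T| * (1/2) ≤ (5/4) * M ^ 3 := by
    calc |s - T| * (1/2) ≤ |s - T| * (s + T) :=
          mul_le_mul_of_nonneg_left hsum (abs_nonneg _)
      _ = |s ^ 2 - T ^ 2| := key
      _ ≤ (5/4) * M ^ 3 := hbound
  linarith

/-- Variation of perimeter: there is a universal constant `C > 0` such that for every
Lipschitz `u : [−π,π] → ℝ` (with derivative `u'`) satisfying `u ≥ −1/2` and
`‖u‖_{W^{1,∞}} ≤ M ≤ 1`, the length `L(γ_u) = ∫√((1+u)² + u'²)` of the curve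
`γ_u(t) = (1+u(t))(cos t, sin t)` satisfies
`|L(γ_u) − 2π − ∫u − (1/2)∫u'²| ≤ C·M³`. -/
theorem stmt_12 :
    ∃ C : ℝ, 0 < C ∧ ∀ (u u' : ℝ → ℝ) (M : ℝ),
      (∀ t ∈ Set.Icc (-π) π, HasDerivAt u (u' t) t) →
      ContinuousOn u' (Set.Icc (-π) π) →
      (∀ t ∈ Set.Icc (-π) π, -(1 / 2) ≤ u t) →
      (∀ t ∈ Set.Icc (-π) π, |u t| ≤ M ∧ |u' t| ≤ M) →
      M ≤ 1 →
      |(∫ t in (-π)..π, Real.sqrt ((1 + u t) ^ 2 + (u' t) ^ 2))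
          - 2 * π - (∫ t in (-π)..π, u t) - (1 / 2) * ∫ t in (-π)..π, (u' t) ^ 2|
        ≤ C * M ^ 3 := by
  refine ⟨5 * π, by positivity, ?_⟩
  intro u u' M hu hu'c hge hbnd hM1
  have hpi : -π ≤ π := by linarith [Real.pi_pos]
  have huIcc : Set.uIcc (-π) π = Set.Icc (-π) π := Set.uIcc_of_le hpi
  have hucont : ContinuousOn u (Set.Icc (-π) π) := fun t ht =>
    (hu t ht).continuousAt.continuousWithinAt
  -- continuity of the integrands
  have hscont : ContinuousOn (fun t => Real.sqrt ((1 + u t) ^ 2 + (u' t) ^ 2))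
      (Set.Icc (-π) π) := by
    apply ContinuousOn.sqrt
    exact (((continuousOn_const.add hucont).pow 2).add (hu'c.pow 2))
  have hTcont : ContinuousOn (fun t => 1 + u t + (u' t) ^ 2 / 2) (Set.Icc (-π) π) :=
    (continuousOn_const.add hucont).add ((hu'c.pow 2).div_const 2)
  have hs_int : IntervalIntegrable (fun t => Real.sqrt ((1 + u t) ^ 2 + (u' t) ^ 2))
      MeasureTheory.volume (-π) π := hscont.intervalIntegrable_of_Icc hpi
  have hT_int : IntervalIntegrable (fun t => 1 + u t + (u' t) ^ 2 / 2)
      MeasureTheory.volume (-π) π := hTcont.intervalIntegrable_of_Icc hpi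
  have hu_int : IntervalIntegrable u MeasureTheory.volume (-π) π :=
    hucont.intervalIntegrable_of_Icc hpi
  have hu'2_int : IntervalIntegrable (fun t => (u' t) ^ 2) MeasureTheory.volume (-π) π :=
    (hu'c.pow 2).intervalIntegrable_of_Icc hpi
  -- the integral of T
  have hTint : (∫ t in (-π)..π, (1 + u t + (u' t) ^ 2 / 2))
      = 2 * π + (∫ t in (-π)..π, u t) + (1 / 2) * ∫ t in (-π)..π, (u' t) ^ 2 := by
    rw [intervalIntegral.integral_add (intervalIntegrable_const.add hu_int)
        ((hu'2_int).div_const 2),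
      intervalIntegral.integral_add intervalIntegrable_const hu_int,
      intervalIntegral.integral_div, intervalIntegral.integral_const]
    simp [smul_eq_mul]
    ring
  -- rewrite the LHS as an integral of the difference
  have hLHS : (∫ t in (-π)..π, Real.sqrt ((1 + u t) ^ 2 + (u' t) ^ 2))
      - 2 * π - (∫ t in (-π)..π, u t) - (1 / 2) * (∫ t in (-π)..π, (u' t) ^ 2)
      = ∫ t in (-π)..π, (Real.sqrt ((1 + u t) ^ 2 + (u' t) ^ 2)
          - (1 + u t + (u' t) ^ 2 / 2)) := by
    rw [intervalIntegral.integral_sub hs_int hT_int, hTint]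
    ring
  rw [hLHS]
  have habs : ∀ t ∈ Set.Icc (-π) π,
      ‖Real.sqrt ((1 + u t) ^ 2 + (u' t) ^ 2) - (1 + u t + (u' t) ^ 2 / 2)‖
        ≤ (5/2) * M ^ 3 := by
    intro t ht
    rw [Real.norm_eq_abs]
    exact ptwise_est (u t) (u' t) M (hge t ht) (hbnd t ht).1 (hbnd t ht).2 hM1
  have huIoc : Set.uIoc (-π) π = Set.Ioc (-π) π := Set.uIoc_of_le hpi
  have this1 := intervalIntegral.norm_integral_le_of_norm_le_const
    (C := (5/2) * M ^ 3)
    (f := fun t => Real.sqrt ((1 + u t) ^ 2 + (u' t) ^ 2) - (1 + u t + (u' t) ^ 2 / 2))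
    (fun t ht => habs t (Set.Ioc_subset_Icc_self (huIoc ▸ ht)))
  rw [Real.norm_eq_abs] at this1
  have h2 : (5/2) * M ^ 3 * |π - (-π)| = 5 * π * M ^ 3 := by
    rw [abs_of_nonneg (by linarith : (0:ℝ) ≤ π - (-π))]; ring
  linarith [this1]
end

section
/- Let u : [−π, π] → ℝ be Lipschitz with u ≥ −1/2, ‖u‖_{W^{1,∞}} ≤ 1, and suppose u is area-preserving, i.e. ∫_{−π}^{π} u = −(1/2)∫_{−π}^{π} u². Then |L(γ_u) − 2π − (1/2)∫_{−π}^{π}((u')² − u²) dt| ≤ C·‖u‖³_{W^{1,∞}} for a universal constant C. -/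
open Real

lemma ptbound (x b m : ℝ) (hx : |x| ≤ m) (hb : |b| ≤ m) (hm : m ≤ 1) (hx2 : -(1/2) ≤ x) :
    |Real.sqrt ((1+x)^2 + b^2) - (1+x) - b^2/2| ≤ 2*m^3 := by
  set a := 1 + x with ha_def
  have ha : (1:ℝ)/2 ≤ a := by simp [ha_def]; linarith
  have hm0 : 0 ≤ m := le_trans (abs_nonneg x) hx
  have hsq : 0 ≤ a^2 + b^2 := by positivity
  set s := Real.sqrt (a^2+b^2) with hs
  have hs2 : s^2 = a^2 + b^2 := Real.sq_sqrt hsq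
  have hsa : a ≤ s := by
    have h := Real.sqrt_le_sqrt (show a^2 ≤ a^2+b^2 by nlinarith [sq_nonneg b])
    rwa [Real.sqrt_sq (by linarith : (0:ℝ) ≤ a)] at h
  have hb2 : b^2 ≤ m^2 := by
    have := abs_le.mp hb
    nlinarith
  obtain ⟨hx1, hx3⟩ := abs_le.mp hx
  rw [abs_le]
  constructor
  · nlinarith [sq_nonneg (s-a), sq_nonneg b, mul_nonneg (mul_nonneg hm0 hm0) hm0, sq_nonneg (s+a-2), mul_nonneg (sub_nonneg.mpr hsa) (sub_nonneg.mpr hb2)]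
  · nlinarith [sq_nonneg (s-a), sq_nonneg b, mul_nonneg (mul_nonneg hm0 hm0) hm0, sq_nonneg (s+a-2), mul_nonneg (sub_nonneg.mpr hsa) (sub_nonneg.mpr hb2)]

/-- Area-preserving variation of perimeter: there is a universal constant `C > 0` such that
for every Lipschitz `u : [−π,π] → ℝ` (with derivative `u'`) satisfying `u ≥ −1/2`,
`‖u‖_{W^{1,∞}} ≤ M ≤ 1` and the area-preservation condition `∫u = −(1/2)∫u²`, the length
`L(γ_u) = ∫√((1+u)² + u'²)` of `γ_u(t) = (1+u(t))(cos t, sin t)` satisfies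
`|L(γ_u) − 2π − (1/2)∫(u'² − u²)| ≤ C·M³`. -/
theorem stmt_13 :
    ∃ C : ℝ, 0 < C ∧ ∀ (u u' : ℝ → ℝ) (M : ℝ),
      (∀ t ∈ Set.Icc (-π) π, HasDerivAt u (u' t) t) →
      ContinuousOn u' (Set.Icc (-π) π) →
      (∀ t ∈ Set.Icc (-π) π, -(1 / 2) ≤ u t) →
      (∀ t ∈ Set.Icc (-π) π, |u t| ≤ M ∧ |u' t| ≤ M) →
      M ≤ 1 →
      (∫ t in (-π)..π, u t) = -(1 / 2) * ∫ t in (-π)..π, (u t) ^ 2 →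
      |(∫ t in (-π)..π, Real.sqrt ((1 + u t) ^ 2 + (u' t) ^ 2))
          - 2 * π - (1 / 2) * ∫ t in (-π)..π, ((u' t) ^ 2 - (u t) ^ 2)|
        ≤ C * M ^ 3 := by
  refine ⟨14, by norm_num, ?_⟩
  intro u u' M hderiv hcont hge hbnd hM harea
  have hpi : (-π) ≤ π := by linarith [pi_pos]
  have hIcc : Set.uIcc (-π) π = Set.Icc (-π) π := Set.uIcc_of_le hpi
  have hucont : ContinuousOn u (Set.Icc (-π) π) :=
    fun t ht => (hderiv t ht).continuousAt.continuousWithinAt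
  have hucont' : ContinuousOn u' (Set.Icc (-π) π) := hcont
  -- integrabilities
  have hif : IntervalIntegrable (fun t => Real.sqrt ((1 + u t) ^ 2 + (u' t) ^ 2)) MeasureTheory.volume (-π) π := by
    apply ContinuousOn.intervalIntegrable
    rw [hIcc]
    exact Real.continuous_sqrt.comp_continuousOn
      (((continuousOn_const.add hucont).pow 2).add (hucont'.pow 2))
  have hih : IntervalIntegrable (fun t => 1 + u t + (u' t)^2/2) MeasureTheory.volume (-π) π := by
    apply ContinuousOn.intervalIntegrable
    rw [hIcc]
    exact (continuousOn_const.add hucont).add ((hucont'.pow 2).div_const 2)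
  have hig : IntervalIntegrable (fun t => Real.sqrt ((1 + u t) ^ 2 + (u' t) ^ 2) - (1 + u t) - (u' t)^2/2) MeasureTheory.volume (-π) π := by
    have := hif.sub hih
    simpa [sub_sub] using this
  have hiu : IntervalIntegrable u MeasureTheory.volume (-π) π := by
    apply ContinuousOn.intervalIntegrable; rwa [hIcc]
  have hiu2 : IntervalIntegrable (fun t => (u t)^2) MeasureTheory.volume (-π) π := by
    apply ContinuousOn.intervalIntegrable; rw [hIcc]; exact hucont.pow 2
  have hiu'2 : IntervalIntegrable (fun t => (u' t)^2) MeasureTheory.volume (-π) π := by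
    apply ContinuousOn.intervalIntegrable; rw [hIcc]; exact hucont'.pow 2
  -- split integrals
  have hsplit : (∫ t in (-π)..π, Real.sqrt ((1 + u t) ^ 2 + (u' t) ^ 2))
      = (∫ t in (-π)..π, (Real.sqrt ((1 + u t) ^ 2 + (u' t) ^ 2) - (1 + u t) - (u' t)^2/2))
        + ((2*π + ∫ t in (-π)..π, u t) + (1/2) * ∫ t in (-π)..π, (u' t)^2) := by
    have h1 : (∫ t in (-π)..π, (1 + u t + (u' t)^2/2))
        = (2*π + ∫ t in (-π)..π, u t) + (1/2) * ∫ t in (-π)..π, (u' t)^2 := by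
      rw [intervalIntegral.integral_add (IntervalIntegrable.add (intervalIntegrable_const) hiu) (hiu'2.div_const 2),
          intervalIntegral.integral_add intervalIntegrable_const hiu,
          intervalIntegral.integral_div]
      simp
      ring
    rw [← h1, ← intervalIntegral.integral_add hig hih]
    congr 1; ext t; ring
  have hsub : (∫ t in (-π)..π, ((u' t) ^ 2 - (u t) ^ 2))
      = (∫ t in (-π)..π, (u' t)^2) - ∫ t in (-π)..π, (u t)^2 :=
    intervalIntegral.integral_sub hiu'2 hiu2
  -- reduce to |∫ g|
  have hkey : (∫ t in (-π)..π, Real.sqrt ((1 + u t) ^ 2 + (u' t) ^ 2))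
      - 2 * π - (1 / 2) * ∫ t in (-π)..π, ((u' t) ^ 2 - (u t) ^ 2)
      = ∫ t in (-π)..π, (Real.sqrt ((1 + u t) ^ 2 + (u' t) ^ 2) - (1 + u t) - (u' t)^2/2) := by
    rw [hsplit, hsub, harea]; ring
  rw [hkey]
  -- bound the integral
  have hbound : ∀ t ∈ Set.uIoc (-π) π,
      ‖Real.sqrt ((1 + u t) ^ 2 + (u' t) ^ 2) - (1 + u t) - (u' t)^2/2‖ ≤ 2*M^3 := by
    intro t ht
    have ht' : t ∈ Set.Icc (-π) π := by
      rw [Set.uIoc_of_le hpi] at ht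
      exact ⟨le_of_lt ht.1, ht.2⟩
    exact ptbound (u t) (u' t) M (hbnd t ht').1 (hbnd t ht').2 hM (hge t ht')
  have := intervalIntegral.norm_integral_le_of_norm_le_const hbound
  rw [Real.norm_eq_abs] at this
  have hπ : π ≤ 3.15 := by linarith [pi_lt_d2]
  have hM3 : 0 ≤ M^3 := by
    have hM0 : 0 ≤ M := le_trans (abs_nonneg _) (hbnd π (Set.right_mem_Icc.mpr hpi)).1
    positivity
  calc |∫ t in (-π)..π, (Real.sqrt ((1 + u t) ^ 2 + (u' t) ^ 2) - (1 + u t) - (u' t)^2/2)|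
      ≤ 2*M^3 * |π - (-π)| := this
    _ = 4*π * M^3 := by rw [abs_of_nonneg (by linarith)]; ring
    _ ≤ 14 * M^3 := by nlinarith
end
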